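/- arXiv:0905.0230 — 2 statements merged into one kernel-verified Lean document; each statement's English description precedes it below -/
import Mathlib

section
/- The 1D pressureless scheme conserves total mass: if ρᵢⁿ⁺¹ = ρᵢ₋₁ⁿ L(-1+ruᵢ₋₁ⁿ, ruᵢ₋₁ⁿ) + ρᵢⁿ L(ruᵢⁿ, 1+ruᵢⁿ) + ρᵢ₊₁ⁿ L(1+ruᵢ₊₁ⁿ, 2+ruᵢ₊₁ⁿ), where L(a,b) is the length of [0,1]∩[a,b], the states have finite support, all ρᵢⁿ ≥ 0, and the CFL condition r·|uᵢⁿ| ≤ 1 holds for all i, then ∑ᵢ ρᵢⁿ⁺¹ = ∑ᵢ ρᵢⁿ. -/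
/-! Under the CFL condition the intervals `[a-1,a]`, `[a,a+1]`, `[a+1,a+2]` with `a = r uⱼ` tile a
segment containing `[0,1]`, so the mass `ρⱼ` is split among the cells `j-1, j, j+1` with weights
summing to `1`. Summing the scheme over `ℤ` and shifting the outer two sums back by one index
therefore returns `∑ ρⱼ`. -/

/-- Truncated length of `[0,1] ∩ [a,b]`. -/
noncomputable def Ltrunc (a b : ℝ) : ℝ := max 0 (min 1 b - max 0 a)

lemma Ltrunc_add_Ltrunc {a b c : ℝ} (hab : a ≤ b) (hbc : b ≤ c) :
    Ltrunc a b + Ltrunc b c = Ltrunc a c := by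
  simp only [Ltrunc, max_def, min_def]
  split_ifs <;> linarith

lemma Ltrunc_eq_one {a b : ℝ} (ha : a ≤ 0) (hb : 1 ≤ b) : Ltrunc a b = 1 := by
  simp [Ltrunc, ha, hb]

lemma Ltrunc_translates_sum_eq_one {a : ℝ} (h : |a| ≤ 1) :
    Ltrunc (-1 + a) a + Ltrunc a (1 + a) + Ltrunc (1 + a) (2 + a) = 1 := by
  obtain ⟨h₁, h₂⟩ := abs_le.mp h
  rw [Ltrunc_add_Ltrunc (by linarith) (by linarith),
    Ltrunc_add_Ltrunc (by linarith) (by linarith), Ltrunc_eq_one (by linarith) (by linarith)]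

lemma finsum_comp_sub_one_add_add_comp_add_one {M : Type*} [AddCommMonoid M] {f g h : ℤ → M}
    (hf : (Function.support f).Finite) (hg : (Function.support g).Finite)
    (hh : (Function.support h).Finite) :
    ∑ᶠ i, (f (i - 1) + g i + h (i + 1)) = ∑ᶠ i, (f i + g i + h i) := by
  have hf' : (Function.support fun i => f (i - 1)).Finite :=
    hf.preimage (Equiv.subRight (1 : ℤ)).injective.injOn
  have hh' : (Function.support fun i => h (i + 1)).Finite :=
    hh.preimage (Equiv.addRight (1 : ℤ)).injective.injOn
  rw [finsum_add_distrib ((hf'.union hg).subset (Function.support_add _ _)) hh',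
    finsum_add_distrib hf' hg,
    finsum_add_distrib ((hf.union hg).subset (Function.support_add _ _)) hh,
    finsum_add_distrib hf hg, ← finsum_comp_equiv (Equiv.subRight (1 : ℤ)) (f := f),
    ← finsum_comp_equiv (Equiv.addRight (1 : ℤ)) (f := h)]
  rfl

theorem stmt_12_general (ρn : ℤ → ℝ) (un : ℤ → ℝ) (r : ℝ) (hr : 0 < r)
    (hfin : (Function.support ρn).Finite)
    (hCFL : ∀ i, r * |un i| ≤ 1)
    (ρn' : ℤ → ℝ)
    (hsch : ∀ i, ρn' i =
      ρn (i - 1) * Ltrunc (-1 + r * un (i - 1)) (r * un (i - 1)) +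
      ρn i * Ltrunc (r * un i) (1 + r * un i) +
      ρn (i + 1) * Ltrunc (1 + r * un (i + 1)) (2 + r * un (i + 1))) :
    ∑ᶠ i, ρn' i = ∑ᶠ i, ρn i := by
  have hsupp (L : ℤ → ℝ) : (Function.support fun i => ρn i * L i).Finite :=
    hfin.subset (Function.support_mul_subset_left _ _)
  rw [finsum_congr hsch, finsum_comp_sub_one_add_add_comp_add_one
    (f := fun i => ρn i * Ltrunc (-1 + r * un i) (r * un i))
    (g := fun i => ρn i * Ltrunc (r * un i) (1 + r * un i))
    (h := fun i => ρn i * Ltrunc (1 + r * un i) (2 + r * un i)) (hsupp _) (hsupp _) (hsupp _)]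
  refine finsum_congr fun i => ?_
  have hcell : |r * un i| ≤ 1 := by rw [abs_mul, abs_of_pos hr]; exact hCFL i
  rw [← mul_add, ← mul_add, Ltrunc_translates_sum_eq_one hcell, mul_one]

theorem stmt_12 (ρn : ℤ → ℝ) (un : ℤ → ℝ) (r : ℝ) (hr : 0 < r)
    (hρ : ∀ i, 0 ≤ ρn i) (hfin : (Function.support ρn).Finite)
    (hCFL : ∀ i, r * |un i| ≤ 1)
    (ρn' : ℤ → ℝ)
    (hsch : ∀ i, ρn' i =
      ρn (i - 1) * Ltrunc (-1 + r * un (i - 1)) (r * un (i - 1)) +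
      ρn i * Ltrunc (r * un i) (1 + r * un i) +
      ρn (i + 1) * Ltrunc (1 + r * un (i + 1)) (2 + r * un (i + 1))) :
    ∑ᶠ i, ρn' i = ∑ᶠ i, ρn i :=
  stmt_12_general ρn un r hr hfin hCFL ρn' hsch
end

section
/- The vacuum (rarefaction) solution of the pressureless Riemann problem: for u_l < u_r, the pair (ρ,u) defined by ρ(x,t) = ρ_l, u(x,t) = u_l for x < u_l t; ρ(x,t) = 0 for u_l t < x < u_r t; ρ(x,t) = ρ_r, u(x,t) = u_r for x > u_r t, satisfies ρ_t + (ρu)_x = 0 and (ρu)_t + (ρu²)_x = 0 in the sense of distributions on ℝ × (0,∞). Equivalently: for every smooth compactly supported test function ψ on ℝ×(0,∞), ∫∫ (ρ ψ_t + ρu ψ_x) dx dt = 0 and ∫∫ (ρu ψ_t + ρu² ψ_x) dx dt = 0. -/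
open MeasureTheory Set Function

private lemma integ2 {f : ℝ × ℝ → ℝ} (hf : AEStronglyMeasurable f volume)
    {K : Set (ℝ × ℝ)} (hK : IsCompact K) (hs : support f ⊆ K) {C : ℝ}
    (hC : ∀ p, ‖f p‖ ≤ C) : Integrable f := by
  rw [← integrableOn_iff_integrable_of_support_subset hs]
  exact Measure.integrableOn_of_bounded hK.measure_lt_top.ne hf
    (Filter.Eventually.of_forall fun p => hC p)

private lemma integ1 {f : ℝ → ℝ} (hf : AEStronglyMeasurable f volume)
    {K : Set ℝ} (hK : IsCompact K) (hs : support f ⊆ K) {C : ℝ}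
    (hC : ∀ p, ‖f p‖ ≤ C) : Integrable f := by
  rw [← integrableOn_iff_integrable_of_support_subset hs]
  exact Measure.integrableOn_of_bounded hK.measure_lt_top.ne hf
    (Filter.Eventually.of_forall fun p => hC p)

private lemma integral_deriv_zero {f : ℝ → ℝ} (hf : ContDiff ℝ 1 f)
    (h2f : HasCompactSupport f) : ∫ t, deriv f t = 0 := by
  have hi : Integrable (deriv f) :=
    (hf.continuous_deriv le_rfl).integrable_of_hasCompactSupport h2f.deriv
  have := integral_add_compl (measurableSet_Iic (a := (0:ℝ))) hi
  rw [compl_Iic] at this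
  rw [← this, h2f.integral_Iic_deriv_eq hf 0, h2f.integral_Ioi_deriv_eq hf 0]
  ring

private lemma vacuum_key (ul ur cl cr : ℝ) (h : ul < ur)
    (ψ : ℝ → ℝ → ℝ)
    (hsmooth : ContDiff ℝ (⊤ : ℕ∞) (fun p : ℝ × ℝ => ψ p.1 p.2))
    (hcompact : HasCompactSupport (fun p : ℝ × ℝ => ψ p.1 p.2))
    (hzero : ∀ x t, t ≤ 0 → ψ x t = 0) :
    (∫ x : ℝ, ∫ t : ℝ,
        ((if x < ul * t then cl else if x < ur * t then 0 else cr) * deriv (fun τ => ψ x τ) t +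
         (if x < ul * t then cl * ul else if x < ur * t then 0 else cr * ur) *
           deriv (fun ξ => ψ ξ t) x)) = 0 := by
  set Ψ : ℝ × ℝ → ℝ := fun p => ψ p.1 p.2 with hΨdef
  have hΨ1 : ContDiff ℝ 1 Ψ := hsmooth.of_le (by simp)
  have hdiff : ∀ p, HasFDerivAt Ψ (fderiv ℝ Ψ p) p :=
    fun p => ((hΨ1.differentiable one_ne_zero) p).hasFDerivAt
  set D1 : ℝ × ℝ → ℝ := fun p => fderiv ℝ Ψ p (1, 0) with hD1def
  set D2 : ℝ × ℝ → ℝ := fun p => fderiv ℝ Ψ p (0, 1) with hD2def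
  set G : ℝ → ℝ × ℝ → ℝ := fun u p => D2 p + u * D1 p with hGdef
  -- basic facts
  have contfd : Continuous (fderiv ℝ Ψ) := hsmooth.continuous_fderiv (by simp)
  have hGfd : ∀ (u : ℝ) (p : ℝ × ℝ), fderiv ℝ Ψ p (u, 1) = G u p := by
    intro u p
    have hv : ((u, 1) : ℝ × ℝ) = u • ((1 : ℝ), (0 : ℝ)) + ((0 : ℝ), (1 : ℝ)) := by
      simp [Prod.ext_iff]
    rw [hv, map_add, ContinuousLinearMap.map_smul]
    simp [hGdef, hD1def, hD2def, smul_eq_mul]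
    ring
  have contG : ∀ u, Continuous (G u) := by
    intro u
    have h1 : Continuous fun p => fderiv ℝ Ψ p ((u, 1) : ℝ × ℝ) :=
      contfd.clm_apply continuous_const
    have h2 : (fun p => fderiv ℝ Ψ p ((u, 1) : ℝ × ℝ)) = G u := funext fun p => hGfd u p
    rwa [h2] at h1
  have hcsG : ∀ u, HasCompactSupport (G u) := by
    intro u
    have h1 : HasCompactSupport fun p => fderiv ℝ Ψ p ((u, 1) : ℝ × ℝ) :=
      HasCompactSupport.fderiv_apply (𝕜 := ℝ) hcompact ((u,1) : ℝ × ℝ)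
    have h2 : (fun p => fderiv ℝ Ψ p ((u, 1) : ℝ × ℝ)) = G u := funext fun p => hGfd u p
    rwa [h2] at h1
  -- derivative identifications
  have derivt : ∀ x t : ℝ, HasDerivAt (fun τ => ψ x τ) (D2 (x, t)) t := by
    intro x t
    have h1 : HasDerivAt (fun τ : ℝ => ((x, τ) : ℝ × ℝ)) (((0 : ℝ), (1 : ℝ))) t :=
      (hasDerivAt_const t x).prodMk (hasDerivAt_id t)
    exact (hdiff (x, t)).comp_hasDerivAt t h1
  have derivx : ∀ x t : ℝ, HasDerivAt (fun ξ => ψ ξ t) (D1 (x, t)) x := by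
    intro x t
    have h1 : HasDerivAt (fun ξ : ℝ => ((ξ, t) : ℝ × ℝ)) (((1 : ℝ), (0 : ℝ))) x :=
      (hasDerivAt_id x).prodMk (hasDerivAt_const x t)
    exact (hdiff (x, t)).comp_hasDerivAt x h1
  -- vanishing for t ≤ 0
  have hD1zero : ∀ x t : ℝ, t ≤ 0 → D1 (x, t) = 0 := by
    intro x t ht
    have h1 : HasDerivAt (fun ξ => ψ ξ t) (D1 (x, t)) x := derivx x t
    have h2 : (fun ξ => ψ ξ t) = fun _ : ℝ => (0 : ℝ) := funext fun ξ => hzero ξ t ht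
    rw [h2] at h1
    exact h1.unique (hasDerivAt_const x 0)
  have hD2zero' : ∀ x t : ℝ, t < 0 → D2 (x, t) = 0 := by
    intro x t ht
    have h1 : HasDerivAt (fun τ => ψ x τ) (D2 (x, t)) t := derivt x t
    have h2 : (fun _ : ℝ => (0 : ℝ)) =ᶠ[nhds t] fun τ => ψ x τ := by
      filter_upwards [Iio_mem_nhds ht] with s hs
      exact (hzero x s (le_of_lt hs)).symm
    have h3 : HasDerivAt (fun _ : ℝ => (0 : ℝ)) (D2 (x, t)) t := h1.congr_of_eventuallyEq h2
    exact h3.unique (hasDerivAt_const t 0)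
  have hD2zero : ∀ x t : ℝ, t ≤ 0 → D2 (x, t) = 0 := by
    intro x t ht
    rcases lt_or_eq_of_le ht with ht' | ht'
    · exact hD2zero' x t ht'
    · subst ht'
      have contD2 : Continuous D2 := contfd.clm_apply continuous_const
      have hc : Filter.Tendsto (fun s : ℝ => D2 (x, s)) (nhdsWithin 0 (Iio 0))
          (nhds (D2 (x, 0))) := by
        have : Continuous fun s : ℝ => D2 (x, s) :=
          contD2.comp (continuous_const.prodMk continuous_id)
        exact this.continuousAt.tendsto.mono_left nhdsWithin_le_nhds
      have hc0 : Filter.Tendsto (fun s : ℝ => D2 (x, s)) (nhdsWithin 0 (Iio 0))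
          (nhds 0) := by
        apply Filter.Tendsto.congr' _ tendsto_const_nhds
        filter_upwards [self_mem_nhdsWithin] with s hs
        exact (hD2zero' x s hs).symm
      exact tendsto_nhds_unique hc hc0
  -- support radius of Ψ
  obtain ⟨rψ, hrψ⟩ : ∃ r : ℝ, tsupport Ψ ⊆ Metric.closedBall 0 r :=
    hcompact.isBounded.subset_closedBall 0
  -- the key claim for a single travelling step
  have claim : ∀ (u : ℝ) (ind : ℝ → ℝ), Measurable ind → (∀ y, |ind y| ≤ 1) →
      Integrable (fun p : ℝ × ℝ => ind (p.1 - u * p.2) * G u p)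
        ((volume : Measure ℝ).prod volume) ∧
      (∫ x : ℝ, ∫ t : ℝ, ind (x - u * t) * G u (x, t)) = 0 := by
    intro u ind hind hb
    obtain ⟨C, hC⟩ := (hcsG u).exists_bound_of_continuous (contG u)
    obtain ⟨r, hr⟩ : ∃ r : ℝ, tsupport (G u) ⊆ Metric.closedBall 0 r :=
      (hcsG u).isBounded.subset_closedBall 0
    have hbnd : ∀ (a : ℝ) (p : ℝ × ℝ), ‖ind a * G u p‖ ≤ C := by
      intro a p
      rw [norm_mul]
      calc ‖ind a‖ * ‖G u p‖ ≤ 1 * C :=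
            mul_le_mul (by simpa [Real.norm_eq_abs] using hb a) (hC p) (norm_nonneg _)
              zero_le_one
        _ = C := one_mul C
    have hH2 : Integrable (fun p : ℝ × ℝ => ind (p.1 - u * p.2) * G u p) := by
      apply integ2 ?_ (hcsG u) ?_ (fun p => hbnd _ p)
      · exact ((hind.comp (measurable_fst.sub (measurable_const.mul measurable_snd))).mul
          (contG u).measurable).aestronglyMeasurable
      · intro p hp
        exact subset_tsupport _ (right_ne_zero_of_mul hp)
    have hH2p : Integrable (fun p : ℝ × ℝ => ind (p.1 - u * p.2) * G u p)
        ((volume : Measure ℝ).prod volume) := by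
      rw [← Measure.volume_eq_prod]; exact hH2
    have hshift : ∀ t : ℝ, (∫ x : ℝ, ind (x - u * t) * G u (x, t))
        = ∫ y : ℝ, ind y * G u (y + u * t, t) := by
      intro t
      have h0 := integral_add_right_eq_self (μ := volume)
        (fun x => ind (x - u * t) * G u (x, t)) (u * t)
      rw [← h0]
      congr 1; funext y; rw [add_sub_cancel_right]
    have hH2' : Integrable (fun q : ℝ × ℝ => ind q.1 * G u (q.1 + u * q.2, q.2)) := by
      apply integ2 ?_
        (IsCompact.prod (isCompact_Icc (a := -(r + |u| * r)) (b := r + |u| * r))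
          (isCompact_Icc (a := -r) (b := r))) ?_ (fun q => hbnd _ _)
      · exact ((hind.comp measurable_fst).mul
          (((contG u).comp ((continuous_fst.add
            (continuous_const.mul continuous_snd)).prodMk continuous_snd)).measurable)).aestronglyMeasurable
      · intro q hq
        have hG : G u (q.1 + u * q.2, q.2) ≠ 0 := right_ne_zero_of_mul hq
        have h1 : ‖((q.1 + u * q.2, q.2) : ℝ × ℝ)‖ ≤ r := by
          simpa [Metric.mem_closedBall, dist_zero_right] using
            hr (subset_tsupport _ hG)
        have h2 : |q.2| ≤ r := le_trans (norm_snd_le ((q.1 + u * q.2, q.2) : ℝ × ℝ)) h1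
        have h3 : |q.1 + u * q.2| ≤ r :=
          le_trans (norm_fst_le ((q.1 + u * q.2, q.2) : ℝ × ℝ)) h1
        have habs := abs_add_le (q.1 + u * q.2) (-(u * q.2))
        rw [abs_neg, abs_mul] at habs
        have h5 : |u| * |q.2| ≤ |u| * r := mul_le_mul_of_nonneg_left h2 (abs_nonneg u)
        have h6 : q.1 + u * q.2 + -(u * q.2) = q.1 := by ring
        rw [h6] at habs
        have h4 : |q.1| ≤ r + |u| * r := by linarith
        constructor
        · exact abs_le.mp h4
        · exact abs_le.mp h2
    have hinner : ∀ y : ℝ, (∫ t : ℝ, G u (y + u * t, t)) = 0 := by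
      intro y
      set g : ℝ → ℝ := fun s => ψ (y + u * s) s with hgdef
      have hg1 : ContDiff ℝ 1 g := by
        have hcurve : ContDiff ℝ 1 (fun s : ℝ => ((y + u * s, s) : ℝ × ℝ)) :=
          (contDiff_const.add (contDiff_const.mul contDiff_id)).prodMk contDiff_id
        exact hΨ1.comp hcurve
      have hg2 : HasCompactSupport g := by
        apply HasCompactSupport.intro (isCompact_Icc (a := -rψ) (b := rψ))
        intro s hs
        by_contra hgs
        have h1 : ((y + u * s, s) : ℝ × ℝ) ∈ tsupport Ψ := subset_tsupport _ hgs
        have h2 : ‖((y + u * s, s) : ℝ × ℝ)‖ ≤ rψ := by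
          simpa [Metric.mem_closedBall, dist_zero_right] using hrψ h1
        have h3 : |s| ≤ rψ := le_trans (norm_snd_le ((y + u * s, s) : ℝ × ℝ)) h2
        exact hs (abs_le.mp h3)
      have hgd : ∀ t : ℝ, HasDerivAt g (G u (y + u * t, t)) t := by
        intro t
        have hcurve : HasDerivAt (fun s : ℝ => ((y + u * s, s) : ℝ × ℝ)) ((u, 1) : ℝ × ℝ) t := by
          apply HasDerivAt.prodMk ?_ (hasDerivAt_id t)
          simpa using ((hasDerivAt_id t).const_mul u).const_add y
        have hcomp : HasDerivAt (fun s : ℝ => ψ (y + u * s) s)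
            ((fderiv ℝ Ψ (y + u * t, t)) ((u, 1) : ℝ × ℝ)) t :=
          HasFDerivAt.comp_hasDerivAt (f := fun s : ℝ => ((y + u * s, s) : ℝ × ℝ)) t
            (hdiff (y + u * t, t)) hcurve
        rw [hGfd] at hcomp
        exact hcomp
      have heq : (∫ t : ℝ, G u (y + u * t, t)) = ∫ t : ℝ, deriv g t := by
        congr 1; funext t; exact ((hgd t).deriv).symm
      rw [heq]; exact integral_deriv_zero hg1 hg2
    refine ⟨hH2p, ?_⟩
    calc (∫ x : ℝ, ∫ t : ℝ, ind (x - u * t) * G u (x, t))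
        = ∫ t : ℝ, ∫ x : ℝ, ind (x - u * t) * G u (x, t) := integral_integral_swap hH2p
      _ = ∫ t : ℝ, ∫ y : ℝ, ind y * G u (y + u * t, t) := by
          congr 1; funext t; exact hshift t
      _ = ∫ y : ℝ, ∫ t : ℝ, ind y * G u (y + u * t, t) := by
          refine (integral_integral_swap ?_).symm
          rw [← Measure.volume_eq_prod]; exact hH2'
      _ = ∫ y : ℝ, ind y * ∫ t : ℝ, G u (y + u * t, t) := by
          congr 1; funext y; exact integral_const_mul _ _
      _ = 0 := by simp [hinner]
  -- the two step indicators
  set indL : ℝ → ℝ := fun y => if y < 0 then 1 else 0 with hindLdef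
  set indR : ℝ → ℝ := fun y => if y < 0 then 0 else 1 with hindRdef
  have hindLm : Measurable indL := Measurable.ite measurableSet_Iio measurable_const measurable_const
  have hindRm : Measurable indR := Measurable.ite measurableSet_Iio measurable_const measurable_const
  have hindLb : ∀ y, |indL y| ≤ 1 := by
    intro y; by_cases hy : y < 0 <;> simp [hindLdef, hy]
  have hindRb : ∀ y, |indR y| ≤ 1 := by
    intro y; by_cases hy : y < 0 <;> simp [hindRdef, hy]
  obtain ⟨hL2, hL3⟩ := claim ul indL hindLm hindLb
  obtain ⟨hR2, hR3⟩ := claim ur indR hindRm hindRb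
  -- pointwise identity
  have key : ∀ x t : ℝ,
      ((if x < ul * t then cl else if x < ur * t then 0 else cr) * deriv (fun τ => ψ x τ) t +
       (if x < ul * t then cl * ul else if x < ur * t then 0 else cr * ur) *
         deriv (fun ξ => ψ ξ t) x)
      = cl * (indL (x - ul * t) * G ul (x, t)) + cr * (indR (x - ur * t) * G ur (x, t)) := by
    intro x t
    rw [(derivt x t).deriv, (derivx x t).deriv]
    rcases le_or_gt t 0 with ht | ht
    · simp [hGdef, hD1zero x t ht, hD2zero x t ht]
    · have hlr : ul * t < ur * t := by nlinarith
      by_cases h1 : x < ul * t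
      · have h2 : x < ur * t := h1.trans hlr
        have e1 : x - ul * t < 0 := by linarith
        have e2 : x - ur * t < 0 := by linarith
        simp only [if_pos h1, if_pos h2, hindLdef, hindRdef, if_pos e1, if_pos e2, hGdef]
        ring
      · push_neg at h1
        have e1 : ¬ (x - ul * t < 0) := by push_neg; linarith
        by_cases h2 : x < ur * t
        · have e2 : x - ur * t < 0 := by linarith
          simp only [if_neg (not_lt.mpr h1), if_pos h2, hindLdef, hindRdef, if_neg e1,
            if_pos e2, hGdef]
          ring
        · push_neg at h2
          have e2 : ¬ (x - ur * t < 0) := by push_neg; linarith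
          simp only [if_neg (not_lt.mpr h1), if_neg (not_lt.mpr h2), hindLdef, hindRdef,
            if_neg e1, if_neg e2, hGdef]
          ring
  calc (∫ x : ℝ, ∫ t : ℝ,
        ((if x < ul * t then cl else if x < ur * t then 0 else cr) * deriv (fun τ => ψ x τ) t +
         (if x < ul * t then cl * ul else if x < ur * t then 0 else cr * ur) *
           deriv (fun ξ => ψ ξ t) x))
      = ∫ x : ℝ, ∫ t : ℝ,
          (cl * (indL (x - ul * t) * G ul (x, t)) + cr * (indR (x - ur * t) * G ur (x, t))) := by
        congr 1; funext x; congr 1; funext t; exact key x t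
    _ = (∫ x : ℝ, ∫ t : ℝ, cl * (indL (x - ul * t) * G ul (x, t)))
        + ∫ x : ℝ, ∫ t : ℝ, cr * (indR (x - ur * t) * G ur (x, t)) :=
        integral_integral_add (hL2.const_mul cl) (hR2.const_mul cr)
    _ = cl * (∫ x : ℝ, ∫ t : ℝ, indL (x - ul * t) * G ul (x, t))
        + cr * (∫ x : ℝ, ∫ t : ℝ, indR (x - ur * t) * G ur (x, t)) := by
        simp_rw [integral_const_mul]
    _ = 0 := by rw [hL3, hR3]; ring

theorem stmt_16 (ρl ρr ul ur : ℝ) (hρl : 0 ≤ ρl) (hρr : 0 ≤ ρr) (h : ul < ur)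
    (ρ m E : ℝ → ℝ → ℝ)
    (hρ : ∀ x t, ρ x t = if x < ul * t then ρl else if x < ur * t then 0 else ρr)
    (hm : ∀ x t, m x t = if x < ul * t then ρl * ul else if x < ur * t then 0 else ρr * ur)
    (hE : ∀ x t, E x t =
      if x < ul * t then ρl * ul ^ 2 else if x < ur * t then 0 else ρr * ur ^ 2)
    (ψ : ℝ → ℝ → ℝ)
    (hsmooth : ContDiff ℝ (⊤ : ℕ∞) (fun p : ℝ × ℝ => ψ p.1 p.2))
    (hcompact : HasCompactSupport (fun p : ℝ × ℝ => ψ p.1 p.2))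
    (hzero : ∀ x t, t ≤ 0 → ψ x t = 0) :
    (∫ x : ℝ, ∫ t : ℝ,
        (ρ x t * deriv (fun τ => ψ x τ) t + m x t * deriv (fun ξ => ψ ξ t) x)) = 0 ∧
    (∫ x : ℝ, ∫ t : ℝ,
        (m x t * deriv (fun τ => ψ x τ) t + E x t * deriv (fun ξ => ψ ξ t) x)) = 0 := by
  constructor
  · have hk := vacuum_key ul ur ρl ρr h ψ hsmooth hcompact hzero
    have heq : (∫ x : ℝ, ∫ t : ℝ,
        (ρ x t * deriv (fun τ => ψ x τ) t + m x t * deriv (fun ξ => ψ ξ t) x))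
        = ∫ x : ℝ, ∫ t : ℝ,
        ((if x < ul * t then ρl else if x < ur * t then 0 else ρr) * deriv (fun τ => ψ x τ) t +
         (if x < ul * t then ρl * ul else if x < ur * t then 0 else ρr * ur) *
           deriv (fun ξ => ψ ξ t) x) := by
      congr 1; funext x; congr 1; funext t; rw [hρ, hm]
    rw [heq]; exact hk
  · have hk := vacuum_key ul ur (ρl * ul) (ρr * ur) h ψ hsmooth hcompact hzero
    have heq : (∫ x : ℝ, ∫ t : ℝ,
        (m x t * deriv (fun τ => ψ x τ) t + E x t * deriv (fun ξ => ψ ξ t) x))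
        = ∫ x : ℝ, ∫ t : ℝ,
        ((if x < ul * t then ρl * ul else if x < ur * t then 0 else ρr * ur) *
           deriv (fun τ => ψ x τ) t +
         (if x < ul * t then ρl * ul * ul else if x < ur * t then 0 else ρr * ur * ur) *
           deriv (fun ξ => ψ ξ t) x) := by
      congr 1; funext x; congr 1; funext t
      rw [hm, hE, show ρl * ul ^ 2 = ρl * ul * ul from by ring,
        show ρr * ur ^ 2 = ρr * ur * ur from by ring]
    rw [heq]; exact hk
end
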